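/- Let f : ℝ² → ℝ be the function associated to the Cantor staircase a (i.e., f(s, a(τ)s²/2 + τ) = a(τ)·s for all s, τ), and let C_y = {a(τ)y²/2 + τ : τ ∈ C} for y ≠ 0. Then for every y ≠ 0 and every t ∈ C_y, the upper derivative limsup_{t'→t} |f(y,t') − f(y,t)|/|t' − t| is at most 2/|y|; and for t ∉ C_y the map t' ↦ f(y, t') is locally constant near t, so ∂_t f(y,t) = 0. -/
import Mathlib


open MeasureTheory Filter

/-- The n-th stage of the ternary Cantor set construction. -/
def cantorStage : ℕ → Set ℝ
  | 0 => Set.Icc 0 1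
  | n + 1 => (fun x => x / 3) '' cantorStage n ∪ (fun x => 2 / 3 + x / 3) '' cantorStage n

/-- The ternary Cantor set. -/
def ternaryCantorSet : Set ℝ := ⋂ n, cantorStage n

/-- a : ℝ → ℝ is the extended Cantor staircase function: continuous, nondecreasing,
equal to 0 on (−∞,0], 1 on [1,∞), and satisfying the Cantor self-similarity relations. -/
def IsCantorFunction (a : ℝ → ℝ) : Prop :=
  Continuous a ∧ Monotone a ∧ (∀ τ ≤ 0, a τ = 0) ∧ (∀ τ, 1 ≤ τ → a τ = 1) ∧
    ∀ τ ∈ Set.Icc (0 : ℝ) 1, a (τ / 3) = a τ / 2 ∧ a (2 / 3 + τ / 3) = 1 / 2 + a τ / 2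

lemma zero_one_mem_cantorStage (n : ℕ) :
    (0:ℝ) ∈ cantorStage n ∧ (1:ℝ) ∈ cantorStage n := by
  induction n with
  | zero => constructor <;> simp [cantorStage]
  | succ n ih =>
    constructor
    · exact Set.mem_union_left _ ⟨0, ih.1, by norm_num⟩
    · exact Set.mem_union_right _ ⟨1, ih.2, by norm_num⟩

lemma cantor_locConst (a : ℝ → ℝ) (ha : IsCantorFunction a) :
    ∀ n, ∀ τ ∈ Set.Icc (0:ℝ) 1, τ ∉ cantorStage n →
      ∃ ε > 0, ∀ σ, |σ - τ| < ε → a σ = a τ := by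
  obtain ⟨hc, hm, h0, h1, hrel⟩ := ha
  have ha0 : a 0 = 0 := h0 0 le_rfl
  have ha1 : a 1 = 1 := h1 1 le_rfl
  have h13 : a (1/3) = 1/2 := by
    have := (hrel 1 ⟨zero_le_one, le_rfl⟩).1
    rw [ha1] at this
    norm_num at this
    linarith
  have h23 : a (2/3) = 1/2 := by
    have := (hrel 0 ⟨le_rfl, zero_le_one⟩).2
    rw [ha0] at this
    norm_num at this
    linarith
  have hmid : ∀ ρ : ℝ, 1/3 ≤ ρ → ρ ≤ 2/3 → a ρ = 1/2 := fun ρ hρ1 hρ2 =>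
    le_antisymm (h23 ▸ hm hρ2) (h13 ▸ hm hρ1)
  intro n
  induction n with
  | zero => intro τ hτ hτn; exact absurd hτ hτn
  | succ n ih =>
    intro τ hτ hτn
    rw [show cantorStage (n+1) =
      (fun x => x / 3) '' cantorStage n ∪ (fun x => 2 / 3 + x / 3) '' cantorStage n from rfl]
      at hτn
    rcases lt_or_ge τ (1/3) with hlt | hge
    · -- left third
      have h3 : (3*τ) ∉ cantorStage n := fun h => hτn (Or.inl ⟨3*τ, h, by ring⟩)
      have hτpos : 0 < τ := by
        rcases hτ.1.lt_or_eq with h | h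
        · exact h
        · exfalso; apply h3; rw [← h, mul_zero]; exact (zero_one_mem_cantorStage n).1
      obtain ⟨ε', hε', hC⟩ := ih (3*τ) ⟨by linarith, by linarith⟩ h3
      refine ⟨min (ε'/3) (min τ (1/3 - τ)), lt_min (by linarith) (lt_min hτpos (by linarith)), ?_⟩
      intro σ hσ
      have hσ1 : |σ - τ| < ε'/3 := lt_of_lt_of_le hσ (min_le_left _ _)
      have hσ2 : |σ - τ| < τ := lt_of_lt_of_le hσ ((min_le_right _ _).trans (min_le_left _ _))
      have hσ3 : |σ - τ| < 1/3 - τ :=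
        lt_of_lt_of_le hσ ((min_le_right _ _).trans (min_le_right _ _))
      have hb1 : 0 < σ := by
        have := abs_lt.1 hσ2
        linarith [this.1]
      have hb2 : σ < 1/3 := by
        have := abs_lt.1 hσ3
        linarith [this.2]
      have e1 : a σ = a (3*σ)/2 := by
        have := (hrel (3*σ) ⟨by linarith, by linarith⟩).1
        rw [show 3*σ/3 = σ by ring] at this
        exact this
      have e2 : a τ = a (3*τ)/2 := by
        have := (hrel (3*τ) ⟨by linarith, by linarith⟩).1
        rw [show 3*τ/3 = τ by ring] at this
        exact this
      rw [e1, e2, hC (3*σ) (by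
        rw [show 3*σ - 3*τ = 3*(σ - τ) by ring, abs_mul]
        rw [show |(3:ℝ)| = 3 by norm_num]
        linarith)]
    rcases lt_or_ge τ (2/3) with hlt2 | hge2
    · -- middle third
      have h13' : (1/3:ℝ) < τ := by
        rcases hge.lt_or_eq with h | h
        · exact h
        · exfalso
          exact hτn (Or.inl ⟨1, (zero_one_mem_cantorStage n).2, by simpa using h⟩)
      refine ⟨min (τ - 1/3) (2/3 - τ), lt_min (by linarith) (by linarith), ?_⟩
      intro σ hσ
      have hσ2 : |σ - τ| < τ - 1/3 := lt_of_lt_of_le hσ (min_le_left _ _)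
      have hσ3 : |σ - τ| < 2/3 - τ := lt_of_lt_of_le hσ (min_le_right _ _)
      have h1' := abs_lt.1 hσ2
      have h2' := abs_lt.1 hσ3
      rw [hmid σ (by linarith [h1'.1]) (by linarith [h2'.2]), hmid τ hge hlt2.le]
    · -- right third
      have h3 : (3*τ - 2) ∉ cantorStage n := fun h => hτn (Or.inr ⟨3*τ - 2, h, by ring⟩)
      have hτlt : τ < 1 := by
        rcases hτ.2.lt_or_eq with h | h
        · exact h
        · exfalso
          apply h3
          rw [h, show (3*(1:ℝ) - 2) = 1 by norm_num]
          exact (zero_one_mem_cantorStage n).2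
      have hτgt : 2/3 < τ := by
        rcases hge2.lt_or_eq with h | h
        · exact h
        · exfalso
          exact hτn (Or.inr ⟨0, (zero_one_mem_cantorStage n).1, by rw [← h]; norm_num⟩)
      obtain ⟨ε', hε', hC⟩ := ih (3*τ - 2) ⟨by linarith, by linarith⟩ h3
      refine ⟨min (ε'/3) (min (τ - 2/3) (1 - τ)), lt_min (by linarith) (lt_min (by linarith) (by linarith)), ?_⟩
      intro σ hσ
      have hσ1 : |σ - τ| < ε'/3 := lt_of_lt_of_le hσ (min_le_left _ _)
      have hσ2 : |σ - τ| < τ - 2/3 := lt_of_lt_of_le hσ ((min_le_right _ _).trans (min_le_left _ _))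
      have hσ3 : |σ - τ| < 1 - τ :=
        lt_of_lt_of_le hσ ((min_le_right _ _).trans (min_le_right _ _))
      have hb1 : 2/3 < σ := by have := abs_lt.1 hσ2; linarith [this.1]
      have hb2 : σ < 1 := by have := abs_lt.1 hσ3; linarith [this.2]
      have e1 : a σ = 1/2 + a (3*σ - 2)/2 := by
        have := (hrel (3*σ - 2) ⟨by linarith, by linarith⟩).2
        rw [show 2/3 + (3*σ - 2)/3 = σ by ring] at this
        exact this
      have e2 : a τ = 1/2 + a (3*τ - 2)/2 := by
        have := (hrel (3*τ - 2) ⟨by linarith, by linarith⟩).2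
        rw [show 2/3 + (3*τ - 2)/3 = τ by ring] at this
        exact this
      rw [e1, e2, hC (3*σ - 2) (by
        rw [show 3*σ - 2 - (3*τ - 2) = 3*(σ - τ) by ring, abs_mul]
        rw [show |(3:ℝ)| = 3 by norm_num]
        linarith)]

/-- Vertical difference quotients of the Cantor graphical-strip function: the upper derivative
is ≤ 2/|y| on C_y, and f(y,·) is locally constant (so ∂_t f = 0) off C_y. -/
theorem stmt_16 (a : ℝ → ℝ) (ha : IsCantorFunction a)
    (f : ℝ × ℝ → ℝ) (hf : Continuous f)
    (heq : ∀ s τ, f (s, a τ * s ^ 2 / 2 + τ) = a τ * s)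
    (y : ℝ) (hy : y ≠ 0) :
    (∀ t ∈ (fun τ => a τ * y ^ 2 / 2 + τ) '' ternaryCantorSet,
      Filter.limsup (fun t' => |f (y, t') - f (y, t)| / |t' - t|) (nhdsWithin t {t}ᶜ)
        ≤ 2 / |y|) ∧
    (∀ t ∉ (fun τ => a τ * y ^ 2 / 2 + τ) '' ternaryCantorSet,
      (∀ᶠ t' in nhds t, f (y, t') = f (y, t)) ∧ deriv (fun t' => f (y, t')) t = 0) := by
  obtain ⟨hc, hm, h0, h1, hrel⟩ := ha
  have hy' : 0 < |y| := abs_pos.2 hy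
  set g : ℝ → ℝ := fun τ => a τ * y ^ 2 / 2 + τ with hg
  have hsurj : ∀ t : ℝ, ∃ τ, g τ = t := by
    intro t
    have hgc : Continuous g := by
      simp only [hg]; fun_prop
    have hA : g (min (t - 1) (-1)) ≤ t := by
      have h0' : a (min (t - 1) (-1)) = 0 := h0 _ (le_trans (min_le_right _ _) (by norm_num))
      simp only [hg, h0']
      have := min_le_left (t-1) (-1)
      linarith
    have hB : t ≤ g (max (t + 1) 2) := by
      have h1' : a (max (t + 1) 2) = 1 := h1 _ (le_trans (by norm_num) (le_max_right _ _))
      simp only [hg, h1']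
      nlinarith [le_max_left (t+1) 2, sq_nonneg y]
    have hle : min (t - 1) (-1) ≤ max (t + 1) 2 :=
      le_trans (min_le_right _ _) (le_trans (by norm_num) (le_max_right _ _))
    obtain ⟨τ, _, hτ⟩ := intermediate_value_Icc hle hgc.continuousOn ⟨hA, hB⟩
    exact ⟨τ, hτ⟩
  have key : ∀ τ τ', τ ≤ τ' → |f (y, g τ') - f (y, g τ)| ≤ 2 / |y| * |g τ' - g τ| := by
    intro τ τ' hle
    have hfτ : f (y, g τ) = a τ * y := heq y τ
    have hfτ' : f (y, g τ') = a τ' * y := heq y τ'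
    have hΔa : 0 ≤ a τ' - a τ := sub_nonneg.2 (hm hle)
    have hΔτ : 0 ≤ τ' - τ := sub_nonneg.2 hle
    have hΔg : a τ' * y ^ 2 / 2 - a τ * y ^ 2 / 2 ≤ g τ' - g τ := by
      simp only [hg]; linarith
    have hgnn : 0 ≤ g τ' - g τ := by
      simp only [hg]; nlinarith [sq_nonneg y]
    rw [hfτ, hfτ', abs_of_nonneg hgnn,
      show a τ' * y - a τ * y = (a τ' - a τ) * y by ring, abs_mul, abs_of_nonneg hΔa,
      div_mul_eq_mul_div, le_div_iff₀ hy']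
    have hsq : |y| * |y| = y ^ 2 := by
      rw [← abs_mul, abs_mul_self]; ring
    rw [mul_assoc, hsq, show (a τ' - a τ) * y ^ 2 = 2 * (a τ' * y ^ 2 / 2 - a τ * y ^ 2 / 2) by ring]
    linarith
  have hlip : ∀ t t' : ℝ, |f (y, t') - f (y, t)| ≤ 2 / |y| * |t' - t| := by
    intro t t'
    obtain ⟨τ, rfl⟩ := hsurj t
    obtain ⟨τ', rfl⟩ := hsurj t'
    rcases le_total τ τ' with h | h
    · exact key τ τ' h
    · rw [abs_sub_comm, abs_sub_comm (g τ')]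
      exact key τ' τ h
  have hbound : ∀ t t' : ℝ, |f (y, t') - f (y, t)| / |t' - t| ≤ 2 / |y| := by
    intro t t'
    rcases eq_or_ne t' t with rfl | hne
    · simp only [sub_self, abs_zero, div_zero]
      positivity
    · rw [div_le_iff₀ (abs_pos.2 (sub_ne_zero.2 hne)), div_mul_eq_mul_div,
        ← div_mul_eq_mul_div]
      exact hlip t t'
  constructor
  · intro t _
    apply Filter.limsup_le_of_le
    · exact Filter.isCoboundedUnder_le_of_le _
        fun t' => div_nonneg (abs_nonneg _) (abs_nonneg _)
    · exact Filter.Eventually.of_forall fun t' => hbound t t'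
  · intro t ht
    obtain ⟨τ₀, hτ₀⟩ := hsurj t
    have hτ₀C : τ₀ ∉ ternaryCantorSet := fun h => ht ⟨τ₀, h, hτ₀⟩
    have hev : ∀ᶠ t' in nhds t, f (y, t') = f (y, t) := by
      rcases lt_or_ge τ₀ 0 with hneg | hpos
      · have ht0 : t = τ₀ := by
          rw [← hτ₀]; simp [hg, h0 τ₀ hneg.le]
        have e : ∀ s : ℝ, s ≤ 0 → f (y, s) = 0 := by
          intro s hs
          have := heq y s
          rw [h0 s hs] at this
          simpa using this
        filter_upwards [Iio_mem_nhds (show t < 0 by rw [ht0]; exact hneg)] with t' ht'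
        rw [e t' ht'.le, e t (by rw [ht0]; exact hneg.le)]
      rcases lt_or_ge 1 τ₀ with hgt | hle1
      · have ht0 : t = y ^ 2 / 2 + τ₀ := by
          rw [← hτ₀]; simp only [hg]; rw [h1 τ₀ hgt.le]; ring
        have e : ∀ s : ℝ, y ^ 2 / 2 + 1 < s → f (y, s) = y := by
          intro s hs
          have h1s : (1:ℝ) ≤ s - y ^ 2 / 2 := by linarith
          have := heq y (s - y ^ 2 / 2)
          rw [h1 _ h1s, show (1:ℝ) * y ^ 2 / 2 + (s - y ^ 2 / 2) = s by ring] at this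
          simpa using this
        have htmem : y ^ 2 / 2 + 1 < t := by rw [ht0]; linarith
        filter_upwards [Ioi_mem_nhds htmem] with t' ht'
        rw [e t' ht', e t htmem]
      · have hτIcc : τ₀ ∈ Set.Icc (0:ℝ) 1 := ⟨hpos, hle1⟩
        obtain ⟨n, hn⟩ : ∃ n, τ₀ ∉ cantorStage n := by
          by_contra h
          push_neg at h
          exact hτ₀C (Set.mem_iInter.2 h)
        obtain ⟨ε, hε, hconst⟩ :=
          cantor_locConst a ⟨hc, hm, h0, h1, hrel⟩ n τ₀ hτIcc hn
        filter_upwards [Metric.ball_mem_nhds t hε] with t' ht'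
        have hd : |(t' - a τ₀ * y ^ 2 / 2) - τ₀| < ε := by
          have : dist t' t < ε := ht'
          rw [Real.dist_eq, ← hτ₀] at this
          simp only [hg] at this
          rw [show (t' - a τ₀ * y ^ 2 / 2) - τ₀ = t' - (a τ₀ * y ^ 2 / 2 + τ₀) by ring]
          exact this
        have haτ : a (t' - a τ₀ * y ^ 2 / 2) = a τ₀ := hconst _ hd
        have h1' := heq y (t' - a τ₀ * y ^ 2 / 2)
        rw [haτ, show a τ₀ * y ^ 2 / 2 + (t' - a τ₀ * y ^ 2 / 2) = t' by ring] at h1'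
        rw [h1', ← hτ₀]
        exact (heq y τ₀).symm
    refine ⟨hev, ?_⟩
    have hde : deriv (fun t' => f (y, t')) t = deriv (fun _ => f (y, t)) t :=
      Filter.EventuallyEq.deriv_eq hev
    rw [hde, deriv_const]
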